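/- If a diffusion auction mechanism is 1-Shapley fair (every buyer's utility under truthful reporting equals her Shapley contribution, u_i = φ_i(θ') for all i ∈ N) and is non-deficit in the sense that the seller's revenue is at least her Shapley contribution (Σ_{i∈N} p_i ≥ φ_s(θ')), then the mechanism's allocation must be efficient: SW(θ', π) = SW*(θ', V). -/

import Mathlib

/-!
The Shapley value is efficient: in `∑ i, φ i` the coefficient of each `SW*(S)` cancels
except for `S = V` and `S = ∅`, so the contributions add up to `SW*(V) - SW*(∅) = SW*(V)`.
Fairness writes the welfare of `π` as `∑_{i ≠ s} (φ i + p i)`, and non-deficit bounds the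
payments below by `φ s`, so `SW(π) ≥ ∑ i, φ i = SW*(V)`; the reverse inequality holds because
`π` is feasible for the grand coalition.
-/

namespace DA

open scoped Classical

/-- A report profile for selling `k` homogeneous items: each agent reports a
valuation over quantities `0, …, k` and a set of neighbors. -/
structure Profile (V : Type*) (k : ℕ) where
  val : V → ℕ → ℝ
  nbr : V → Set V

/-- A valuation is valid if it is normalized (`v 0 = 0`) and has
non-increasing marginals on `{0, …, k}`. -/
def ValidVal (k : ℕ) (v : ℕ → ℝ) : Prop :=
  v 0 = 0 ∧ ∀ q : ℕ, q + 2 ≤ k → v (q + 2) - v (q + 1) ≤ v (q + 1) - v q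

variable {V : Type*}

/-- A profile is valid (w.r.t. seller `s`) if every buyer's valuation is valid. -/
def Profile.Valid {k : ℕ} (θ : Profile V k) (s : V) : Prop :=
  ∀ i : V, i ≠ s → ValidVal k (θ.val i)

/-- The reported (undirected) adjacency: `{i, j}` is an edge whenever
`j ∈ r'_i` (or symmetrically `i ∈ r'_j`). -/
def Profile.adj {k : ℕ} (θ : Profile V k) (i j : V) : Prop :=
  j ∈ θ.nbr i ∨ i ∈ θ.nbr j

/-- The feasible set `F(θ', B)` of a coalition `B`: the buyers in `B` that are
connected to the seller `s` by a path of reported edges lying inside `B`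
(empty if `s ∉ B`). -/
def Profile.feasible {k : ℕ} (θ : Profile V k) (s : V) (B : Set V) : Set V :=
  {i | i ≠ s ∧ i ∈ B ∧ s ∈ B ∧
    Relation.ReflTransGen (fun a b => θ.adj a b ∧ a ∈ B ∧ b ∈ B) s i}

/-- Updating agent `i`'s report in a profile. -/
def updateAgent [DecidableEq V] {k : ℕ} (θ : Profile V k) (i : V)
    (v : ℕ → ℝ) (r : Set V) : Profile V k :=
  ⟨Function.update θ.val i v, Function.update θ.nbr i r⟩

/-- The profile `θ'_B` obtained by removing (setting to nil) the reports of
all agents outside the coalition `B`. -/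
noncomputable def Profile.restrict {k : ℕ} (θ : Profile V k) (B : Set V) : Profile V k :=
  ⟨fun i q => if i ∈ B then θ.val i q else 0,
   fun i => if i ∈ B then θ.nbr i ∩ B else ∅⟩

section Homogeneous

variable [Fintype V] [DecidableEq V]

/-- Social welfare of an allocation `π` under reports `θ`. -/
def SW {k : ℕ} (θ : Profile V k) (s : V) (π : V → ℕ) : ℝ :=
  ∑ i ∈ Finset.univ.erase s, θ.val i (π i)

/-- The allocations admissible for a coalition `B` with irrevocable prior
allocation `πhat`: at most `k` items in total are allocated (none to the
seller), only buyers in `F(θ, B)` receive items, and nobody receives fewer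
items than in `πhat`. -/
def feasAllocs {k : ℕ} (θ : Profile V k) (s : V) (B : Set V) (πhat : V → ℕ) :
    Set (V → ℕ) :=
  {π | π s = 0 ∧ (∑ i ∈ Finset.univ.erase s, π i) ≤ k ∧
    (∀ i, i ∉ θ.feasible s B → π i = 0) ∧ ∀ j, j ≠ s → πhat j ≤ π j}

/-- `SW*(θ, B, πhat)`: the maximum social welfare over the admissible
allocations for coalition `B` with prior allocation `πhat`. -/
noncomputable def SWstar {k : ℕ} (θ : Profile V k) (s : V) (B : Set V)
    (πhat : V → ℕ) : ℝ :=
  sSup (SW θ s '' feasAllocs θ s B πhat)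

/-- A chosen allocation attaining `SW*(θ, B, πhat)`. -/
noncomputable def bestAlloc {k : ℕ} (θ : Profile V k) (s : V) (B : Set V)
    (πhat : V → ℕ) : V → ℕ :=
  Classical.epsilon fun π =>
    π ∈ feasAllocs θ s B πhat ∧ SW θ s π = SWstar θ s B πhat

/-- `o_{≺i}`: the set of agents strictly preceding `i` in the order `o`. -/
def pred (o : V ≃ Fin (Fintype.card V)) (i : V) : Set V := {j | o j < o i}

/-- `o_{≼i} = o_{≺i} ∪ {i}`. -/
def predeq (o : V ≃ Fin (Fintype.card V)) (i : V) : Set V := {j | o j ≤ o i}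

/-- The partial allocation produced by PDA after the first `t` agents of the
order `o` have been traversed: the seller is skipped, and each traversed buyer
`i` receives her share in a chosen allocation attaining
`SW*(θ, o_{≼i}, π^{o≺i})`, earlier allocations being irrevocable. -/
noncomputable def pdaStep {k : ℕ} (θ : Profile V k) (s : V)
    (o : V ≃ Fin (Fintype.card V)) : ℕ → V → ℕ
  | 0 => fun _ => 0
  | t + 1 =>
    if h : t < Fintype.card V then
      let i := o.symm ⟨t, h⟩
      if i = s then pdaStep θ s o t
      else Function.update (pdaStep θ s o t) i
        (bestAlloc θ s (predeq o i) (pdaStep θ s o t) i)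
    else pdaStep θ s o t

/-- `π^{o≺i}`: the allocation fixed by PDA right before agent `i` is traversed. -/
noncomputable def pdaPrior {k : ℕ} (θ : Profile V k) (s : V)
    (o : V ≃ Fin (Fintype.card V)) (i : V) : V → ℕ :=
  pdaStep θ s o (o i : ℕ)

/-- The final allocation `π^o` produced by PDA under the order `o`. -/
noncomputable def pdaAlloc {k : ℕ} (θ : Profile V k) (s : V)
    (o : V ≃ Fin (Fintype.card V)) : V → ℕ :=
  pdaStep θ s o (Fintype.card V)

/-- The payment charged by PDA to agent `i` under the order `o`:
`p_i = SW*(θ, o_{≺i}, π^{o≺i}) − SW*(θ, o_{≼i}, π^{o≺i}) + v'_i(π_i)`, except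
that agents traversed after all `k` items have been allocated pay `0`
(and the seller pays nothing). -/
noncomputable def pdaPay {k : ℕ} (θ : Profile V k) (s : V)
    (o : V ≃ Fin (Fintype.card V)) (i : V) : ℝ :=
  if i = s then 0
  else if (∑ j ∈ Finset.univ.erase s, pdaPrior θ s o i j) = k then 0
  else SWstar θ s (pred o i) (pdaPrior θ s o i)
    - SWstar θ s (predeq o i) (pdaPrior θ s o i)
    + θ.val i (pdaAlloc θ s o i)

/-- `u_i^o`: the utility of buyer `i` with true valuation `v` under order `o`. -/
noncomputable def pdaUtil {k : ℕ} (v : ℕ → ℝ) (θ : Profile V k) (s : V)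
    (o : V ≃ Fin (Fintype.card V)) (i : V) : ℝ :=
  v (pdaAlloc θ s o i) - pdaPay θ s o i

/-- `E_PDA(u_i)`: buyer `i`'s expected utility over the uniformly random order. -/
noncomputable def pdaExpUtil {k : ℕ} (v : ℕ → ℝ) (θ : Profile V k) (s : V)
    (i : V) : ℝ :=
  (∑ o : V ≃ Fin (Fintype.card V), pdaUtil v θ s o i) /
    ((Fintype.card V).factorial : ℝ)

/-- `μ(θ)`: the fraction of orders for which PDA terminates with no item sold. -/
noncomputable def mu {k : ℕ} (θ : Profile V k) (s : V) : ℝ :=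
  (Nat.card {o : V ≃ Fin (Fintype.card V) // ∀ j, pdaAlloc θ s o j = 0} : ℝ) /
    ((Fintype.card V).factorial : ℝ)

/-- The Shapley contribution `φ_i(θ)` of agent `i`. -/
noncomputable def shapley {k : ℕ} (θ : Profile V k) (s : V) (i : V) : ℝ :=
  ∑ B ∈ (Finset.univ.erase i).powerset,
    ((B.card.factorial * (Fintype.card V - B.card - 1).factorial : ℝ) /
      ((Fintype.card V).factorial : ℝ)) *
    (SWstar θ s (↑(insert i B)) 0 - SWstar θ s (↑B) 0)

end Homogeneous

end DA

open Finset

section Shapley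

variable {V : Type*} [Fintype V] [DecidableEq V]

theorem sum_univ_sum_powerset_erase {M : Type*} [AddCommMonoid M] (g : Finset V → M) :
    ∑ i, ∑ B ∈ (univ.erase i).powerset, g B = ∑ B, #Bᶜ • g B := by
  rw [sum_comm' (t' := univ) (s' := fun B => Bᶜ)]
  · simp only [sum_const]
  · intro i B
    simp [subset_iff, eq_comm]

theorem sum_univ_sum_powerset_erase_insert {M : Type*} [AddCommGroup M] (g : Finset V → M) :
    ∑ i, ∑ B ∈ (univ.erase i).powerset, g (insert i B) = ∑ S, #S • g S := by
  have h (i : V) : ∑ B ∈ (univ.erase i).powerset, g (insert i B)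
      = ∑ S, g S - ∑ B ∈ (univ.erase i).powerset, g B := by
    rw [eq_sub_iff_add_eq, add_comm, ← sum_powerset_insert (notMem_erase i univ),
      insert_erase (mem_univ i), powerset_univ]
  rw [sum_congr rfl fun i _ => h i, sum_sub_distrib, sum_univ_sum_powerset_erase, sum_const,
    card_univ, smul_sum, ← sum_sub_distrib]
  refine sum_congr rfl fun S _ => ?_
  rw [← card_add_card_compl S, add_nsmul, add_sub_cancel_right]

noncomputable def shapleyWeight (n b : ℕ) : ℝ :=
  (b.factorial * (n - b - 1).factorial : ℝ) / (n.factorial : ℝ)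

noncomputable def shapleyValue (f : Finset V → ℝ) (i : V) : ℝ :=
  ∑ B ∈ (univ.erase i).powerset, shapleyWeight (Fintype.card V) #B * (f (insert i B) - f B)

theorem shapleyWeight_telescope {n m : ℕ} (hmn : m ≤ n) :
    m * shapleyWeight n (m - 1) - (n - m : ℕ) * shapleyWeight n m
      = (if m = n then 1 else 0) - (if m = 0 then 1 else 0) := by
  have hn : (n.factorial : ℝ) ≠ 0 := by positivity
  rcases Nat.eq_zero_or_pos m with rfl | hm
  · rcases Nat.eq_zero_or_pos n with rfl | hn0
    · simp
    · have h : (n : ℝ) * (n - 1).factorial = n.factorial := by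
        exact_mod_cast Nat.mul_factorial_pred hn0.ne'
      simp only [shapleyWeight, Nat.cast_zero, zero_mul, zero_sub, Nat.sub_zero, Nat.factorial_zero,
        Nat.cast_one, one_mul, ← h, hn0.ne, if_true, if_false, neg_inj]
      rw [← mul_div_assoc, div_self (h ▸ hn)]
  rcases hmn.eq_or_lt with rfl | hlt
  · have h : (m : ℝ) * (m - 1).factorial = m.factorial := by
      exact_mod_cast Nat.mul_factorial_pred hm.ne'
    simp only [shapleyWeight, Nat.sub_self, Nat.sub_sub_self hm, Nat.zero_sub, Nat.factorial_zero,
      Nat.cast_zero, Nat.cast_one, mul_one, zero_mul, sub_zero, ← h, hm.ne', if_true, if_false]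
    rw [← mul_div_assoc, div_self (h ▸ hn)]
  · have h1 : n - (m - 1) - 1 = n - m := by omega
    have h2 : (m : ℝ) * (m - 1).factorial = m.factorial := by
      exact_mod_cast Nat.mul_factorial_pred hm.ne'
    have h3 : ((n - m : ℕ) : ℝ) * (n - m - 1).factorial = (n - m).factorial := by
      exact_mod_cast Nat.mul_factorial_pred (Nat.sub_ne_zero_of_lt hlt)
    simp only [shapleyWeight, h1, hlt.ne, hm.ne', if_false, sub_zero]
    rw [mul_div_assoc', mul_div_assoc', ← mul_assoc, h2, sub_eq_zero]
    congr 1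
    rw [mul_left_comm, h3]

theorem sum_shapleyValue (f : Finset V → ℝ) : ∑ i, shapleyValue f i = f univ - f ∅ := by
  let w := shapleyWeight (Fintype.card V)
  -- `f S` is reached as `insert i B` by the `#S` players `i ∈ S`, and as `B` by the `#Sᶜ` others;
  -- the weights make these two contributions cancel unless `S = ∅` or `S = univ`.
  have h_insert : ∑ i, ∑ B ∈ (univ.erase i).powerset, w #B * f (insert i B)
      = ∑ S, #S • (w (#S - 1) * f S) := by
    rw [← sum_univ_sum_powerset_erase_insert]
    refine sum_congr rfl fun i _ => sum_congr rfl fun B hB => ?_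
    rw [card_insert_of_notMem fun hi => notMem_erase i univ (mem_powerset.1 hB hi),
      Nat.add_sub_cancel]
  have h_coeff (S : Finset V) : #S • (w (#S - 1) * f S) - #Sᶜ • (w #S * f S)
      = (if S = univ then f S else 0) - (if S = ∅ then f S else 0) := by
    have h := shapleyWeight_telescope (card_le_univ S)
    simp only [card_eq_iff_eq_univ, card_eq_zero, ← card_compl] at h
    simp only [w, nsmul_eq_mul, ← mul_assoc, ← sub_mul, h]
    split_ifs <;> ring
  calc ∑ i, shapleyValue f i
      = ∑ i, ∑ B ∈ (univ.erase i).powerset, w #B * f (insert i B)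
        - ∑ i, ∑ B ∈ (univ.erase i).powerset, w #B * f B := by
        simp only [shapleyValue, mul_sub, sum_sub_distrib]; rfl
    _ = ∑ S, ((if S = univ then f S else 0) - (if S = ∅ then f S else 0)) := by
        rw [h_insert, sum_univ_sum_powerset_erase, ← sum_sub_distrib]
        exact sum_congr rfl fun S _ => h_coeff S
    _ = f univ - f ∅ := by
        rw [sum_sub_distrib, sum_ite_eq', sum_ite_eq', if_pos (mem_univ _), if_pos (mem_univ _)]

end Shapley

namespace DA

variable {V : Type*} {k : ℕ} {θ : Profile V k} {s : V}

theorem feasible_empty : θ.feasible s ∅ = ∅ := by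
  ext i
  simp [Profile.feasible]

variable [Fintype V] [DecidableEq V]

theorem feasAllocs_empty : feasAllocs θ s ∅ 0 = {0} :=
  Set.eq_singleton_iff_unique_mem.2
    ⟨⟨rfl, by simp, fun _ _ => rfl, fun _ _ => le_rfl⟩,
      fun _ hπ => funext fun i => hπ.2.2.1 i (by simp [feasible_empty])⟩

theorem le_of_mem_feasAllocs {B : Set V} {πhat π : V → ℕ} (hπ : π ∈ feasAllocs θ s B πhat)
    (i : V) : π i ≤ k := by
  obtain ⟨hs, hk, -, -⟩ := hπ
  rcases eq_or_ne i s with rfl | hi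
  · simp [hs]
  · exact (single_le_sum (fun _ _ => Nat.zero_le _) (mem_erase.2 ⟨hi, mem_univ i⟩)).trans hk

theorem finite_feasAllocs (B : Set V) (πhat : V → ℕ) : (feasAllocs θ s B πhat).Finite :=
  (Set.Finite.pi' fun _ => Set.finite_Iic k).subset fun _ hπ => le_of_mem_feasAllocs hπ

theorem SW_le_SWstar {B : Set V} {πhat π : V → ℕ} (hπ : π ∈ feasAllocs θ s B πhat) :
    SW θ s π ≤ SWstar θ s B πhat :=
  le_csSup ((finite_feasAllocs B πhat).image _).bddAbove (Set.mem_image_of_mem _ hπ)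

theorem SW_zero (h0 : ∀ i ≠ s, θ.val i 0 = 0) : SW θ s 0 = 0 :=
  sum_eq_zero fun i hi => h0 i (ne_of_mem_erase hi)

theorem SWstar_empty (h0 : ∀ i ≠ s, θ.val i 0 = 0) : SWstar θ s ∅ 0 = 0 := by
  rw [SWstar, feasAllocs_empty, Set.image_singleton, csSup_singleton, SW_zero h0]

theorem shapley_eq_shapleyValue (i : V) :
    shapley θ s i = shapleyValue (fun B : Finset V => SWstar θ s B 0) i :=
  rfl

theorem sum_shapley (h0 : ∀ i ≠ s, θ.val i 0 = 0) :
    ∑ i, shapley θ s i = SWstar θ s Set.univ 0 := by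
  simp only [shapley_eq_shapleyValue, sum_shapleyValue, coe_univ, coe_empty, SWstar_empty h0,
    sub_zero]

end DA

theorem one_shapley_fair_nondeficit_efficient_general {V : Type*} [Fintype V]
    [DecidableEq V] {k : ℕ}
    (θ : DA.Profile V k) (s : V) (hθ : θ.Valid s)
    (π : V → ℕ) (p : V → ℝ)
    (hπ : π ∈ DA.feasAllocs θ s Set.univ 0)
    (hfair : ∀ i : V, i ≠ s → θ.val i (π i) - p i = DA.shapley θ s i)
    (hnd : DA.shapley θ s s ≤ ∑ i ∈ Finset.univ.erase s, p i) :
    DA.SW θ s π = DA.SWstar θ s Set.univ 0 := by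
  refine le_antisymm (DA.SW_le_SWstar hπ) ?_
  calc DA.SWstar θ s Set.univ 0
      = ∑ i ∈ univ.erase s, DA.shapley θ s i + DA.shapley θ s s := by
        rw [sum_erase_add _ _ (mem_univ s), DA.sum_shapley fun i hi => (hθ i hi).1]
    _ ≤ ∑ i ∈ univ.erase s, DA.shapley θ s i + ∑ i ∈ univ.erase s, p i := by gcongr
    _ = DA.SW θ s π := by
        rw [← sum_add_distrib, DA.SW]
        exact sum_congr rfl fun i hi => by linarith [hfair i (ne_of_mem_erase hi)]

/-- If a diffusion auction mechanism is 1-Shapley fair (every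
buyer's utility under truthful reporting equals her Shapley contribution) and
is non-deficit in the sense that the seller's revenue is at least her Shapley
contribution, then the mechanism's allocation must be efficient:
SW(θ', π) = SW*(θ', V). -/
theorem one_shapley_fair_nondeficit_efficient {V : Type*} [Fintype V]
    [DecidableEq V] {k : ℕ} (hk : 1 ≤ k)
    (θ : DA.Profile V k) (s : V) (hθ : θ.Valid s)
    (π : V → ℕ) (p : V → ℝ)
    (hπ : π ∈ DA.feasAllocs θ s Set.univ 0)
    (hfair : ∀ i : V, i ≠ s → θ.val i (π i) - p i = DA.shapley θ s i)
    (hnd : DA.shapley θ s s ≤ ∑ i ∈ Finset.univ.erase s, p i) :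
    DA.SW θ s π = DA.SWstar θ s Set.univ 0 :=
  one_shapley_fair_nondeficit_efficient_general θ s hθ π p hπ hfair hnd
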